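/- Let S = X₁ + ... + X_n where X₁,...,X_n are independent nonnegative random variables with E[S] > 0. Choose an index I ∈ {1,...,n} independently of everything else with P(I = i) = E[X_i]/E[S]. Then the size-bias transform of S is distributed as X₁ + ... + X_n + X_I^s − X_I, where X_I^s denotes an independent size-bias of the chosen summand. -/

import Mathlib

/-!
Multiplication by the index is a derivation of convolution (`k = j + (k - j)`), so
`k · P(S = k) = ∑ᵢ ((⋆_{j ≠ i} P_j) ⋆ (m · P_i(m)))(k)`. Dividing by `E[S] = ∑ᵢ E[X_i]` (means add
under convolution of probability distributions) and writing `m · P_i(m) = E[X_i] · P_i^s(m)`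
turns the right-hand side into the mixture over `i`.
-/

/-- Convolution of two mass functions on ℕ (distribution of an independent sum). -/
def convPMF (f g : ℕ → ℝ) : ℕ → ℝ :=
  fun k => ∑ j ∈ Finset.range (k + 1), f j * g (k - j)

/-- Point mass at `0`. -/
def deltaPMF : ℕ → ℝ := fun k => if k = 0 then 1 else 0

/-- Distribution of the independent sum of a list of ℕ-valued distributions. -/
def convList : List (ℕ → ℝ) → (ℕ → ℝ)
  | [] => deltaPMF
  | f :: fs => convPMF f (convList fs)

/-- Mean of a distribution on ℕ. -/
noncomputable def meanPMF (P : ℕ → ℝ) : ℝ := ∑' n : ℕ, (n : ℝ) * P n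

/-- The mass function of the size-bias transform of a distribution `P` on ℕ. -/
noncomputable def sizeBiasPMF (P : ℕ → ℝ) : ℕ → ℝ :=
  fun k => (k : ℝ) * P k / meanPMF P

lemma summable_of_tsum_ne_zero {ι α : Type*} [AddCommMonoid α] [TopologicalSpace α]
    {f : ι → α} (h : ∑' i, f i ≠ 0) : Summable f := by
  by_contra hf
  exact h (tsum_eq_zero_of_not_summable hf)

lemma convPMF_eq_coeff (f g : ℕ → ℝ) (k : ℕ) :
    convPMF f g k = PowerSeries.coeff k (PowerSeries.mk f * PowerSeries.mk g) := by
  rw [PowerSeries.coeff_mul, Finset.Nat.sum_antidiagonal_eq_sum_range_succ_mk]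
  simp [convPMF]

lemma mk_convPMF (f g : ℕ → ℝ) :
    PowerSeries.mk (convPMF f g) = PowerSeries.mk f * PowerSeries.mk g := by
  ext k
  rw [PowerSeries.coeff_mk, convPMF_eq_coeff]

lemma convPMF_comm (f g : ℕ → ℝ) : convPMF f g = convPMF g f := by
  funext k
  rw [convPMF_eq_coeff, convPMF_eq_coeff, mul_comm]

lemma convPMF_assoc (f g h : ℕ → ℝ) :
    convPMF (convPMF f g) h = convPMF f (convPMF g h) := by
  funext k
  rw [convPMF_eq_coeff, convPMF_eq_coeff, mk_convPMF, mk_convPMF, mul_assoc]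

lemma convPMF_sum_right {ι : Type*} (s : Finset ι) (f : ℕ → ℝ) (g : ι → ℕ → ℝ) (k : ℕ) :
    convPMF f (fun m => ∑ i ∈ s, g i m) k = ∑ i ∈ s, convPMF f (g i) k := by
  simp only [convPMF, Finset.mul_sum]
  exact Finset.sum_comm

lemma convPMF_const_mul_right (f g : ℕ → ℝ) (c : ℝ) (k : ℕ) :
    convPMF f (fun m => c * g m) k = c * convPMF f g k := by
  simp only [convPMF, Finset.mul_sum]
  exact Finset.sum_congr rfl fun j _ => by ring

lemma natCast_mul_convPMF (f g : ℕ → ℝ) (k : ℕ) :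
    (k : ℝ) * convPMF f g k
      = convPMF (fun j => (j : ℝ) * f j) g k + convPMF f (fun m => (m : ℝ) * g m) k := by
  simp only [convPMF, Finset.mul_sum, ← Finset.sum_add_distrib]
  refine Finset.sum_congr rfl fun j hj => ?_
  rw [Nat.cast_sub (Nat.lt_succ_iff.mp (Finset.mem_range.mp hj))]
  ring

lemma natCast_mul_convList (Ps : List (ℕ → ℝ)) (k : ℕ) :
    (k : ℝ) * convList Ps k
      = ∑ i : Fin Ps.length,
          convPMF (convList (Ps.eraseIdx i)) (fun m => (m : ℝ) * Ps.get i m) k := by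
  induction Ps generalizing k with
  | nil => rcases k with _ | k <;> simp [convList, deltaPMF]
  | cons P Ps ih =>
    calc (k : ℝ) * convList (P :: Ps) k
        = convPMF (fun j => (j : ℝ) * P j) (convList Ps) k
          + convPMF P (fun m => (m : ℝ) * convList Ps m) k := natCast_mul_convPMF _ _ k
      _ = convPMF (convList Ps) (fun j => (j : ℝ) * P j) k
          + ∑ i : Fin Ps.length,
              convPMF (convPMF P (convList (Ps.eraseIdx i)))
                (fun m => (m : ℝ) * Ps.get i m) k := by
          simp only [ih, convPMF_sum_right, convPMF_assoc, convPMF_comm (convList Ps)]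
      _ = _ := (Fin.sum_univ_succ (n := Ps.length) fun i =>
            convPMF (convList ((P :: Ps).eraseIdx i)) (fun m => (m : ℝ) * (P :: Ps).get i m) k).symm

lemma hasSum_convPMF {f g : ℕ → ℝ} (hf : Summable f) (hg : Summable g) :
    HasSum (convPMF f g) ((∑' n, f n) * ∑' n, g n) := by
  have hprod := summable_norm_sum_mul_range_of_summable_norm hf.norm hg.norm
  rw [tsum_mul_tsum_eq_tsum_sum_range_of_summable_norm hf.norm hg.norm]
  exact hprod.of_norm.hasSum

lemma hasSum_natCast_mul_convPMF {f g : ℕ → ℝ} (hf : Summable f) (hg : Summable g)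
    (hf' : Summable fun n : ℕ => (n : ℝ) * f n) (hg' : Summable fun n : ℕ => (n : ℝ) * g n) :
    HasSum (fun n : ℕ => (n : ℝ) * convPMF f g n)
      (meanPMF f * (∑' n, g n) + (∑' n, f n) * meanPMF g) := by
  simp only [natCast_mul_convPMF]
  exact (hasSum_convPMF hf' hg).add (hasSum_convPMF hf hg')

lemma hasSum_convList {Ps : List (ℕ → ℝ)} (h1 : ∀ P ∈ Ps, HasSum P 1) :
    HasSum (convList Ps) 1 := by
  induction Ps with
  | nil => exact hasSum_ite_eq 0 (1 : ℝ)
  | cons P Ps ih =>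
    have hP := h1 P List.mem_cons_self
    have hPs := ih fun Q hQ => h1 Q (List.mem_cons_of_mem _ hQ)
    simpa [convList, hP.tsum_eq, hPs.tsum_eq] using hasSum_convPMF hP.summable hPs.summable

lemma hasSum_natCast_mul_convList {Ps : List (ℕ → ℝ)} (h1 : ∀ P ∈ Ps, HasSum P 1)
    (hmean : ∀ P ∈ Ps, Summable fun n : ℕ => (n : ℝ) * P n) :
    HasSum (fun n : ℕ => (n : ℝ) * convList Ps n) (Ps.map meanPMF).sum := by
  induction Ps with
  | nil =>
    simp only [List.map_nil, List.sum_nil]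
    convert hasSum_zero with n
    rcases n with _ | n <;> simp [convList, deltaPMF]
  | cons P Ps ih =>
    have hP := h1 P List.mem_cons_self
    have hPs := hasSum_convList fun Q hQ => h1 Q (List.mem_cons_of_mem _ hQ)
    have hmPs := ih (fun Q hQ => h1 Q (List.mem_cons_of_mem _ hQ))
      (fun Q hQ => hmean Q (List.mem_cons_of_mem _ hQ))
    have := hasSum_natCast_mul_convPMF hP.summable hPs.summable (hmean P List.mem_cons_self)
      hmPs.summable
    simpa [convList, hP.tsum_eq, hPs.tsum_eq, meanPMF, hmPs.tsum_eq] using this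

/-- The division by the mean in `sizeBiasPMF` is harmless even for mean `0`, since then
`n * P n` vanishes identically. -/
lemma meanPMF_mul_sizeBiasPMF {P : ℕ → ℝ} (h0 : ∀ n, 0 ≤ P n)
    (hmean : Summable fun n : ℕ => (n : ℝ) * P n) (n : ℕ) :
    meanPMF P * sizeBiasPMF P n = n * P n := by
  by_cases hμ : meanPMF P = 0
  · have hle : (n : ℝ) * P n ≤ meanPMF P :=
      hmean.le_tsum n fun j _ => mul_nonneg j.cast_nonneg (h0 j)
    rw [hμ, zero_mul]
    exact (le_antisymm (hle.trans_eq hμ) (mul_nonneg n.cast_nonneg (h0 n))).symm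
  · exact mul_div_cancel₀ _ hμ

theorem stmt5_general (Ps : List (ℕ → ℝ))
    (hnonneg : ∀ P ∈ Ps, ∀ n, 0 ≤ P n)
    (hsum : ∀ P ∈ Ps, ∑' n, P n = 1)
    (hmean : ∀ P ∈ Ps, Summable (fun n : ℕ => (n : ℝ) * P n)) :
    ∀ k : ℕ,
      sizeBiasPMF (convList Ps) k
        = ∑ i : Fin Ps.length,
            (meanPMF (Ps.get i) / ∑ j : Fin Ps.length, meanPMF (Ps.get j)) *
              convPMF (convList (Ps.eraseIdx i)) (sizeBiasPMF (Ps.get i)) k := by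
  intro k
  have h1 : ∀ P ∈ Ps, HasSum P 1 := fun P hP =>
    hsum P hP ▸ (summable_of_tsum_ne_zero (by simp [hsum P hP])).hasSum
  have hmeanS : meanPMF (convList Ps) = ∑ j : Fin Ps.length, meanPMF (Ps.get j) :=
    (hasSum_natCast_mul_convList h1 hmean).tsum_eq.trans (by simp)
  rw [sizeBiasPMF, hmeanS, natCast_mul_convList, Finset.sum_div]
  refine Finset.sum_congr rfl fun i _ => ?_
  have hP := Ps.get_mem i
  simp only [← meanPMF_mul_sizeBiasPMF (hnonneg _ hP) (hmean _ hP), convPMF_const_mul_right]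
  ring

/-- Let `S = X₁ + ⋯ + X_n` with `X₁, …, X_n` independent nonnegative
(integer-valued) random variables and `E[S] > 0`.  Choosing an index `I` with
`P(I = i) = E[X_i]/E[S]`, the size-bias transform of `S` is distributed as
`X₁ + ⋯ + X_n + X_I^s − X_I`, i.e. as the mixture over `i` of the independent sum of
`X_j, j ≠ i`, with an independent size-bias `X_i^s`. -/
theorem stmt5 (Ps : List (ℕ → ℝ))
    (hnonneg : ∀ P ∈ Ps, ∀ n, 0 ≤ P n)
    (hsum : ∀ P ∈ Ps, ∑' n, P n = 1)
    (hmean : ∀ P ∈ Ps, Summable (fun n : ℕ => (n : ℝ) * P n))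
    (hpos : 0 < ∑ i : Fin Ps.length, meanPMF (Ps.get i)) :
    ∀ k : ℕ,
      sizeBiasPMF (convList Ps) k
        = ∑ i : Fin Ps.length,
            (meanPMF (Ps.get i) / ∑ j : Fin Ps.length, meanPMF (Ps.get j)) *
              convPMF (convList (Ps.eraseIdx i)) (sizeBiasPMF (Ps.get i)) k :=
  stmt5_general Ps hnonneg hsum hmean
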